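/- arXiv:1806.02282 — 5 statements merged into one kernel-verified Lean document; each statement's English description precedes it below -/
import Mathlib

section
/- Support property of the cost/reward ratio: let s = xy and s' = xyz be searches (z extending xy), and suppose ρ(z) ≥ ρ(y), where ρ(u) = (∑_{i∈u} w_i)/(∑_{i∈u} c_i) is the density of the support of u. Then J⁺(xy) ≥ min{J⁺(x), J⁺(xyz)}, where J⁺(s) = max{0, J(s)} and J(s) = (∑_{i=1}^{|s|} c_{s_i}(1 − ∑_{j<i} w_{s_j})) / (∑_{i∈s} w_{s_i}). -/
/-- Numerator of the cost/reward ratio: `∑_i c_{s_i} (1 - ∑_{j<i} w_{s_j})`,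
computed with an accumulator `W` for the weight of the elements already listed. -/
def searchNum {α : Type*} (w c : α → ℝ) : ℝ → List α → ℝ
  | _, [] => 0
  | W, a :: t => c a * (1 - W) + searchNum w c (W + w a) t

/-- The cost/reward ratio `J(s)`, with value `+∞` when the total weight of `s`
vanishes (in particular `J(∅) = +∞`). -/
noncomputable def Jval {α : Type*} (w c : α → ℝ) (s : List α) : EReal :=
  if (s.map w).sum = 0 then ⊤ else ((searchNum w c 0 s / (s.map w).sum : ℝ) : EReal)

/-- `J⁺ = max {0, J}`. -/
noncomputable def Jplus {α : Type*} (w c : α → ℝ) (s : List α) : EReal :=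
  max 0 (Jval w c s)

/-- Density of (the support of) a sequence. -/
noncomputable def densityL {α : Type*} (w c : α → ℝ) (s : List α) : ℝ :=
  (s.map w).sum / (s.map c).sum

/-!
Write `N`, `W`, `C` for the numerator, weight and cost of a search. For a threshold `T ≥ 0`,
`J⁺(s) ≤ T` amounts to `N(s) ≤ T W(s)` (with `W(s) > 0`), and appending `t` to `s` changes
`N - T W` by `N(t) - W(s) C(t) - T W(t)`, which lies between `C(t)(1 - W(st)) - T W(t)` and
`C(t)(1 - W(s)) - T W(t)`. Take `T = J⁺(xy)` and suppose `J⁺(x) > T`. Then appending `y` to `x`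
does not increase `N - T W`, so `C(y)(1 - W(xy)) ≤ T W(y)`; since `ρ(y) ≤ ρ(z)` this gives
`C(z)(1 - W(xy)) ≤ T W(z)`, so appending `z` to `xy` does not increase `N - T W` either,
i.e. `J⁺(xyz) ≤ T`.
-/

section
variable {α : Type*} (w c : α → ℝ)

lemma List.sum_map_nonneg {f : α → ℝ} (hf : ∀ i, 0 ≤ f i) (s : List α) :
    0 ≤ (s.map f).sum :=
  List.sum_nonneg (by simpa using fun i _ => hf i)

lemma searchNum_shift (W : ℝ) (s : List α) :
    searchNum w c W s = searchNum w c 0 s - W * (s.map c).sum := by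
  induction s generalizing W with
  | nil => simp [searchNum]
  | cons a t ih =>
    simp only [searchNum, List.map_cons, List.sum_cons]
    rw [ih (W + w a), ih (0 + w a)]
    ring

lemma searchNum_cons (a : α) (s : List α) :
    searchNum w c 0 (a :: s) = c a + searchNum w c 0 s - w a * (s.map c).sum := by
  rw [searchNum, searchNum_shift]
  ring

lemma searchNum_append (s t : List α) :
    searchNum w c 0 (s ++ t) =
      searchNum w c 0 s + searchNum w c 0 t - (s.map w).sum * (t.map c).sum := by
  induction s with
  | nil => simp [searchNum]
  | cons a s ih =>
    simp only [List.cons_append, searchNum_cons, ih, List.map_append, List.sum_append,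
      List.map_cons, List.sum_cons]
    ring

variable {w c}

lemma searchNum_le (hw : ∀ i, 0 ≤ w i) (hc : ∀ i, 0 ≤ c i) (s : List α) :
    searchNum w c 0 s ≤ (s.map c).sum := by
  induction s with
  | nil => simp [searchNum]
  | cons a t ih =>
    rw [searchNum_cons, List.map_cons, List.sum_cons]
    linarith [mul_nonneg (hw a) (List.sum_map_nonneg hc t)]

lemma mul_one_sub_le_searchNum (hw : ∀ i, 0 ≤ w i) (hc : ∀ i, 0 ≤ c i) (s : List α) :
    (s.map c).sum * (1 - (s.map w).sum) ≤ searchNum w c 0 s := by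
  induction s with
  | nil => simp [searchNum]
  | cons a t ih =>
    simp only [searchNum_cons, List.map_cons, List.sum_cons]
    linarith [mul_nonneg (hc a) (add_nonneg (hw a) (List.sum_map_nonneg hw t))]

lemma searchNum_append_append_le (hw : ∀ i, 0 ≤ w i) (hc : ∀ i, 0 ≤ c i)
    {T : ℝ} (hT : 0 ≤ T)
    {x y z : List α} (hy : 0 < (y.map c).sum)
    (hρ : (y.map w).sum * (z.map c).sum ≤ (z.map w).sum * (y.map c).sum)
    (hx : T * (x.map w).sum ≤ searchNum w c 0 x)
    (hxy : searchNum w c 0 (x ++ y) ≤ T * ((x ++ y).map w).sum) :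
    searchNum w c 0 (x ++ y ++ z) ≤ T * ((x ++ y ++ z).map w).sum := by
  set a := 1 - ((x ++ y).map w).sum with ha
  have hy' : (y.map c).sum * a ≤ T * (y.map w).sum := by
    have := mul_one_sub_le_searchNum hw hc y
    rw [searchNum_append, List.map_append, List.sum_append] at hxy
    rw [ha, List.map_append, List.sum_append]
    linarith
  have hz' : (z.map c).sum * a ≤ T * (z.map w).sum := by
    refine le_of_mul_le_mul_left ?_ hy
    calc (y.map c).sum * ((z.map c).sum * a) = (z.map c).sum * ((y.map c).sum * a) := by ring
      _ ≤ (z.map c).sum * (T * (y.map w).sum) :=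
        mul_le_mul_of_nonneg_left hy' (List.sum_map_nonneg hc z)
      _ = T * ((y.map w).sum * (z.map c).sum) := by ring
      _ ≤ T * ((z.map w).sum * (y.map c).sum) := mul_le_mul_of_nonneg_left hρ hT
      _ = (y.map c).sum * (T * (z.map w).sum) := by ring
  have := searchNum_le hw hc z
  rw [searchNum_append, List.map_append (l₁ := x ++ y), List.sum_append]
  linarith

variable (w c)

lemma Jplus_of_sum_eq_zero {s : List α} (hs : (s.map w).sum = 0) : Jplus w c s = ⊤ := by
  rw [Jplus, Jval, if_pos hs, max_eq_right le_top]

lemma Jplus_of_sum_pos {s : List α} (hs : 0 < (s.map w).sum) :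
    Jplus w c s = ((max 0 (searchNum w c 0 s / (s.map w).sum) : ℝ) : EReal) := by
  rw [Jplus, Jval, if_neg hs.ne', EReal.coe_strictMono.monotone.map_max, EReal.coe_zero]

lemma Jplus_le_coe_iff {T : ℝ} (hT : 0 ≤ T) {s : List α} (hs : 0 < (s.map w).sum) :
    Jplus w c s ≤ T ↔ searchNum w c 0 s ≤ T * (s.map w).sum := by
  rw [Jplus_of_sum_pos w c hs, EReal.coe_le_coe_iff, max_le_iff, div_le_iff₀ hs]
  exact and_iff_right hT

variable {w c}

lemma mul_sum_le_searchNum_of_not_Jplus_le (hw : ∀ i, 0 ≤ w i) (hc : ∀ i, 0 ≤ c i)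
    {T : ℝ} (hT : 0 ≤ T) {s : List α} (h : ¬ Jplus w c s ≤ T) :
    T * (s.map w).sum ≤ searchNum w c 0 s := by
  rcases (List.sum_map_nonneg hw s).eq_or_lt with hs | hs
  · rw [← hs, mul_zero]
    exact (List.sum_map_nonneg hc s).trans
      (by simpa [← hs] using mul_one_sub_le_searchNum hw hc s)
  · exact (lt_of_not_ge ((Jplus_le_coe_iff w c hT hs).not.mp h)).le

end

theorem stmt_5_general (n : ℕ) (w c : Fin n → ℝ)
    (hw : ∀ i, 0 ≤ w i) (hc : ∀ i, 0 < c i)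
    (x y z : List (Fin n))
    (hρ : densityL w c y ≤ densityL w c z) :
    min (Jplus w c x) (Jplus w c (x ++ y ++ z)) ≤ Jplus w c (x ++ y) := by
  have hc' : ∀ i, 0 ≤ c i := fun i => (hc i).le
  rcases eq_or_ne y [] with rfl | hy
  · simp
  rcases eq_or_ne z [] with rfl | hz
  · simp
  have hCpos : ∀ {s : List (Fin n)}, s ≠ [] → 0 < (s.map c).sum := fun hs =>
    List.sum_pos _ (by simpa using fun i _ => hc i) (by simpa using hs)
  rcases (List.sum_map_nonneg hw (x ++ y)).eq_or_lt with hxy | hxy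
  · rw [Jplus_of_sum_eq_zero w c hxy.symm]
    exact le_top
  rw [Jplus_of_sum_pos w c hxy]
  set T := max 0 (searchNum w c 0 (x ++ y) / ((x ++ y).map w).sum)
  have hT : 0 ≤ T := le_max_left _ _
  by_cases hx : Jplus w c x ≤ T
  · exact min_le_of_left_le hx
  have hxyz : 0 < ((x ++ y ++ z).map w).sum := by
    rw [List.map_append (l₁ := x ++ y), List.sum_append]
    linarith [List.sum_map_nonneg hw z]
  refine min_le_of_right_le ((Jplus_le_coe_iff w c hT hxyz).2 ?_)
  exact searchNum_append_append_le hw hc' hT (hCpos hy)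
    ((div_le_div_iff₀ (hCpos hy) (hCpos hz)).1 hρ)
    (mul_sum_le_searchNum_of_not_Jplus_le hw hc' hT hx)
    ((Jplus_le_coe_iff w c hT hxy).1 (Jplus_of_sum_pos w c hxy).le)

/-- Support property of the cost/reward ratio: if `xy` and `xyz` are searches
(sequences of distinct arms) and `ρ(z) ≥ ρ(y)`, then
`J⁺(xy) ≥ min {J⁺(x), J⁺(xyz)}`. -/
theorem stmt_5 (n : ℕ) (w c : Fin n → ℝ)
    (hw : ∀ i, 0 ≤ w i) (hc : ∀ i, 0 < c i)
    (x y z : List (Fin n)) (hnodup : (x ++ y ++ z).Nodup)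
    (hρ : densityL w c y ≤ densityL w c z) :
    min (Jplus w c x) (Jplus w c (x ++ y ++ z)) ≤ Jplus w c (x ++ y) :=
  stmt_5_general n w c hw hc x y z hρ
end

section
/- If J(x) > J(xy) and 1 − ∑_{i∈xy} w_i ≥ 0, then J(xy) ≥ (1 − ∑_{i∈xy} w_i)/ρ(y), where ρ(y) = (∑_{i∈y} w_i)/(∑_{i∈y} c_i). -/
/-! The numerator of `J(xy)` splits as `N(x) + Q`, where `Q` is the contribution of `y` started at
the weight `W_x` of `x`. Each term of `Q` has the factor `1 - W_x - (partial weight of y)`, which is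
at least `1 - ∑_{xy} w`, so `Q / W_y ≥ (1 - ∑_{xy} w) / ρ(y)`. Since `J(xy)` is the mediant of
`N(x) / W_x = J(x)` and `Q / W_y`, the hypothesis `J(xy) < J(x)` forces `J(xy) > Q / W_y`.
If `W_x = 0` then `J(x) = ⊤`, but then `J(xy) = (N(x) + Q) / W_y ≥ Q / W_y` directly. -/

theorem div_lt_add_div_add_of_add_div_add_lt {a b p q : ℝ} (hp : 0 < p) (hq : 0 < q)
    (h : (a + b) / (p + q) < a / p) : b / q < (a + b) / (p + q) := by
  rw [div_lt_div_iff₀ (by positivity) hp] at h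
  rw [div_lt_div_iff₀ hq (by positivity)]
  linarith

section SearchNum

variable {α : Type*} (w c : α → ℝ)

theorem searchNum_append_s6 (x y : List α) (W : ℝ) :
    searchNum w c W (x ++ y) = searchNum w c W x + searchNum w c (W + (x.map w).sum) y := by
  induction x generalizing W with
  | nil => simp [searchNum]
  | cons a t ih =>
    simp only [List.cons_append, searchNum, List.map_cons, List.sum_cons, ih, add_assoc]

theorem sum_mul_le_searchNum (s : List α) (W : ℝ)
    (hc : ∀ i ∈ s, 0 ≤ c i) (hw : ∀ i ∈ s, 0 ≤ w i) :
    (s.map c).sum * (1 - W - (s.map w).sum) ≤ searchNum w c W s := by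
  induction s generalizing W with
  | nil => simp [searchNum]
  | cons a t ih =>
    simp only [List.forall_mem_cons] at hc hw
    have hrest := ih (W + w a) hc.2 hw.2
    have hwt : 0 ≤ (t.map w).sum := List.sum_nonneg (by simpa using hw.2)
    simp only [searchNum, List.map_cons, List.sum_cons]
    nlinarith [hc.1, hw.1]

theorem Jval_of_sum_ne_zero {s : List α} (h : (s.map w).sum ≠ 0) :
    Jval w c s = ((searchNum w c 0 s / (s.map w).sum : ℝ) : EReal) :=
  if_neg h

theorem searchNum_div_le_Jval_append {x y : List α}
    (hw : ∀ i ∈ x, 0 ≤ w i) (hc : ∀ i ∈ x, 0 ≤ c i) (hwy : 0 < (y.map w).sum)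
    (hJ : Jval w c (x ++ y) < Jval w c x) :
    ((searchNum w c (x.map w).sum y / (y.map w).sum : ℝ) : EReal) ≤ Jval w c (x ++ y) := by
  have hwx : 0 ≤ (x.map w).sum := List.sum_nonneg (by simpa using hw)
  have hJxy : Jval w c (x ++ y) =
      (((searchNum w c 0 x + searchNum w c (x.map w).sum y) /
        ((x.map w).sum + (y.map w).sum) : ℝ) : EReal) := by
    rw [Jval_of_sum_ne_zero w c (by simp only [List.map_append, List.sum_append]; positivity),
      searchNum_append_s6, zero_add, List.map_append, List.sum_append]
  rw [hJxy] at hJ ⊢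
  rw [EReal.coe_le_coe_iff]
  rcases hwx.eq_or_lt with hwx0 | hwx_pos
  · have hNx : 0 ≤ searchNum w c 0 x := by
      have hcx : 0 ≤ (x.map c).sum := List.sum_nonneg (by simpa using hc)
      have := sum_mul_le_searchNum w c x 0 hc hw
      rw [← hwx0] at this
      linarith
    rw [← hwx0, zero_add]
    gcongr
    linarith
  · rw [Jval_of_sum_ne_zero w c hwx_pos.ne', EReal.coe_lt_coe_iff] at hJ
    exact (div_lt_add_div_add_of_add_div_add_lt hwx_pos hwy hJ).le

end SearchNum

theorem stmt_6_general (n : ℕ) (w c : Fin n → ℝ)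
    (hw : ∀ i, 0 ≤ w i) (hc : ∀ i, 0 < c i)
    (x y : List (Fin n))
    (hwy : 0 < (y.map w).sum)
    (hJ : Jval w c (x ++ y) < Jval w c x) :
    (((1 - ((x ++ y).map w).sum) / densityL w c y : ℝ) : EReal) ≤ Jval w c (x ++ y) := by
  have hQ := sum_mul_le_searchNum w c y (x.map w).sum (fun i _ => (hc i).le) (fun i _ => hw i)
  calc (((1 - ((x ++ y).map w).sum) / densityL w c y : ℝ) : EReal)
      = (((y.map c).sum * (1 - (x.map w).sum - (y.map w).sum) / (y.map w).sum : ℝ) : EReal) := by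
        rw [densityL, div_div_eq_mul_div, List.map_append, List.sum_append]
        congr 1
        ring
    _ ≤ ((searchNum w c (x.map w).sum y / (y.map w).sum : ℝ) : EReal) := by
        exact_mod_cast div_le_div_of_nonneg_right hQ hwy.le
    _ ≤ Jval w c (x ++ y) :=
        searchNum_div_le_Jval_append w c (fun i _ => hw i) (fun i _ => (hc i).le) hwy hJ

/-- If `J(x) > J(xy)` and `1 − ∑_{i∈xy} w_i ≥ 0`, then
`J(xy) ≥ (1 − ∑_{i∈xy} w_i)/ρ(y)`. -/
theorem stmt_6 (n : ℕ) (w c : Fin n → ℝ)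
    (hw : ∀ i, 0 ≤ w i) (hc : ∀ i, 0 < c i)
    (x y : List (Fin n)) (hnodup : (x ++ y).Nodup)
    (hwy : 0 < (y.map w).sum)
    (hJ : Jval w c (x ++ y) < Jval w c x)
    (hsimplex : 0 ≤ 1 - ((x ++ y).map w).sum) :
    (((1 - ((x ++ y).map w).sum) / densityL w c y : ℝ) : EReal) ≤ Jval w c (x ++ y) :=
  stmt_6_general n w c hw hc x y hwy hJ
end

section
/- Smith's rule exchange argument: for a permutation s of [n] and a single adjacent transposition swapping positions i and i+1, the change in weighted completion time d(s) = ∑_{i} w_{s_i} ∑_{j≤i} c_{s_j} equals c_{s_i} c_{s_{i+1}} (w_{s_{i+1}}/c_{s_{i+1}} − w_{s_i}/c_{s_i}); hence d is minimized over all permutations exactly when items are ordered by nonincreasing ratio w_i/c_i. -/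
open Finset

/-- Weighted completion time of the ordering given by a permutation `s` of the
positions: `d(s) = ∑_i w_{s_i} ∑_{j≤i} c_{s_j}`. -/
noncomputable def dPerm {n : ℕ} (w c : Fin n → ℝ) (s : Equiv.Perm (Fin n)) : ℝ :=
  ∑ i : Fin n, w (s i) * ∑ j ∈ Finset.Iic i, c (s j)

/-!
Writing `d(s) = ∑_{q ≤ p} w_{s p} c_{s q}` as a sum over ordered pairs of positions, an adjacent
transposition changes the relative order of exactly one pair of items, which gives the exchange
formula; at a minimum it forces `ρ ∘ s` to be antitone. Conversely, symmetrising over pairs of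
items, `2 d(σ) = ∑_{a,b} pairCost σ a b`, where for `a ≠ b` the pair cost is `w_a c_b` or `w_b c_a`
according to which of the two items comes later in `σ`. A ratio-sorted order picks the smaller of the two
for every pair, so it minimises each term separately.
-/

open Equiv

theorem Fin.swap_le_swap_iff_of_val_add_one_eq {n : ℕ} {i j : Fin n} (hij : (i : ℕ) + 1 = j)
    (p q : Fin n) :
    swap i j q ≤ swap i j p ↔ (q ≤ p ∧ ¬(p = j ∧ q = i)) ∨ (p = i ∧ q = j) := by
  simp only [swap_apply_def, Fin.le_def, Fin.ext_iff]
  split_ifs <;> omega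

theorem Fin.ite_le_sub_ite_swap_le {n : ℕ} {i j : Fin n} (hij : (i : ℕ) + 1 = j)
    (x : Fin n → Fin n → ℝ) (p q : Fin n) :
    (if q ≤ p then x p q else 0) - (if swap i j q ≤ swap i j p then x p q else 0)
      = (if p = j ∧ q = i then x j i else 0) - (if p = i ∧ q = j then x i j else 0) := by
  have hlt : i < j := Fin.lt_def.2 (by omega)
  simp only [Fin.swap_le_swap_iff_of_val_add_one_eq hij]
  by_cases hji : p = j ∧ q = i
  · obtain ⟨rfl, rfl⟩ := hji
    simp [hlt.le, hlt.ne']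
  by_cases hij' : p = i ∧ q = j
  · obtain ⟨rfl, rfl⟩ := hij'
    simp [hlt.not_ge, hlt.ne]
  simp [hji, hij']

section SmithRule

variable {n : ℕ} (w c : Fin n → ℝ)

theorem dPerm_eq_sum_sum (s : Perm (Fin n)) :
    dPerm w c s = ∑ p, ∑ q, if q ≤ p then w (s p) * c (s q) else 0 := by
  refine sum_congr rfl fun p _ => ?_
  rw [mul_sum, ← sum_filter]
  congr 1
  ext q
  simp

theorem dPerm_mul_eq_sum_sum (s τ : Perm (Fin n)) :
    dPerm w c (s * τ) =
      ∑ p, ∑ q, if τ.symm q ≤ τ.symm p then w (s p) * c (s q) else 0 := by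
  rw [dPerm_eq_sum_sum]
  exact Fintype.sum_equiv τ _ _ fun p => Fintype.sum_equiv τ _ _ fun q => by simp

theorem dPerm_sub_dPerm_mul_swap (s : Perm (Fin n)) {i j : Fin n} (hij : (i : ℕ) + 1 = j) :
    dPerm w c s - dPerm w c (s * swap i j) = w (s j) * c (s i) - w (s i) * c (s j) := by
  rw [dPerm_eq_sum_sum, dPerm_mul_eq_sum_sum, symm_swap, ← sum_sub_distrib]
  simp_rw [← sum_sub_distrib, Fin.ite_le_sub_ite_swap_le hij fun p q => w (s p) * c (s q)]
  simp [sum_sub_distrib, ite_and]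

theorem antitone_of_forall_dPerm_le (hc : ∀ k, 0 < c k) {s : Perm (Fin n)}
    (hmin : ∀ σ, dPerm w c s ≤ dPerm w c σ) : Antitone fun i => w (s i) / c (s i) := by
  cases n with
  | zero => exact fun i => i.elim0
  | succ m =>
    refine Fin.antitone_iff_succ_le.2 fun k => ?_
    have hexchange := dPerm_sub_dPerm_mul_swap w c s (i := k.castSucc) (j := k.succ) (by simp)
    have := hmin (s * swap k.castSucc k.succ)
    rw [div_le_div_iff₀ (hc _) (hc _)]
    linarith

def pairCost (σ : Perm (Fin n)) (a b : Fin n) : ℝ :=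
  (if σ.symm b ≤ σ.symm a then w a * c b else 0) + (if σ.symm a ≤ σ.symm b then w b * c a else 0)

theorem two_mul_dPerm (σ : Perm (Fin n)) : 2 * dPerm w c σ = ∑ a, ∑ b, pairCost w c σ a b := by
  have h := dPerm_mul_eq_sum_sum w c 1 σ
  simp only [one_mul, Perm.coe_one, id] at h
  simp only [pairCost, sum_add_distrib, two_mul]
  rw [h, sum_comm (f := fun a b => if σ.symm a ≤ σ.symm b then w b * c a else 0)]

theorem pairCost_self (σ : Perm (Fin n)) (a : Fin n) : pairCost w c σ a a = 2 * (w a * c a) := by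
  simp [pairCost, two_mul]

theorem pairCost_of_ne (σ : Perm (Fin n)) {a b : Fin n} (hab : a ≠ b) :
    pairCost w c σ a b = if σ.symm b < σ.symm a then w a * c b else w b * c a := by
  rcases (σ.symm.injective.ne hab).lt_or_gt with h | h
  · simp [pairCost, h.not_ge, h.le, h.not_gt]
  · simp [pairCost, h, h.le, h.not_ge]

theorem min_le_pairCost (σ : Perm (Fin n)) {a b : Fin n} (hab : a ≠ b) :
    min (w a * c b) (w b * c a) ≤ pairCost w c σ a b := by
  rw [pairCost_of_ne w c σ hab]
  split_ifs
  · exact min_le_left _ _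
  · exact min_le_right _ _

theorem pairCost_eq_min_of_antitone (hc : ∀ k, 0 < c k) {s : Perm (Fin n)}
    (hs : Antitone fun i => w (s i) / c (s i)) {a b : Fin n} (hab : a ≠ b) :
    pairCost w c s a b = min (w a * c b) (w b * c a) := by
  rw [pairCost_of_ne w c s hab]
  split_ifs with h
  · have hab := hs h.le
    simp only [apply_symm_apply, div_le_div_iff₀ (hc _) (hc _)] at hab
    exact (min_eq_left hab).symm
  · have hba := hs (not_lt.1 h)
    simp only [apply_symm_apply, div_le_div_iff₀ (hc _) (hc _)] at hba
    exact (min_eq_right hba).symm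

theorem dPerm_le_of_antitone (hc : ∀ k, 0 < c k) {s : Perm (Fin n)}
    (hs : Antitone fun i => w (s i) / c (s i)) (σ : Perm (Fin n)) :
    dPerm w c s ≤ dPerm w c σ := by
  have hpair : ∀ a b, pairCost w c s a b ≤ pairCost w c σ a b := by
    intro a b
    rcases eq_or_ne a b with rfl | hab
    · rw [pairCost_self, pairCost_self]
    · rw [pairCost_eq_min_of_antitone w c hc hs hab]
      exact min_le_pairCost w c σ hab
  refine le_of_mul_le_mul_left ?_ two_pos
  rw [two_mul_dPerm, two_mul_dPerm]
  exact sum_le_sum fun a _ => sum_le_sum fun b _ => hpair a b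

end SmithRule

theorem stmt_10_general (n : ℕ) (w c : Fin n → ℝ)
    (hc : ∀ i, 0 < c i)
    (s : Equiv.Perm (Fin n)) :
    (∀ i j : Fin n, (i : ℕ) + 1 = (j : ℕ) →
      dPerm w c s - dPerm w c (s * Equiv.swap i j)
        = c (s i) * c (s j) * (w (s j) / c (s j) - w (s i) / c (s i))) ∧
    ((∀ σ : Equiv.Perm (Fin n), dPerm w c s ≤ dPerm w c σ) ↔
      (∀ i j : Fin n, i ≤ j → w (s j) / c (s j) ≤ w (s i) / c (s i))) := by
  refine ⟨fun i j hij => ?_,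
    antitone_of_forall_dPerm_le w c hc, dPerm_le_of_antitone w c hc⟩
  rw [dPerm_sub_dPerm_mul_swap w c s hij]
  field_simp [(hc (s i)).ne', (hc (s j)).ne']

/-- Smith's rule exchange argument: swapping two adjacent positions `i, i+1`
changes `d` by `c_{s_i} c_{s_{i+1}} (ρ(s_{i+1}) − ρ(s_i))` with `ρ(k) = w_k/c_k`;
hence `d` is minimized over all permutations exactly when the items are ordered
by nonincreasing ratio `w/c`. -/
theorem stmt_10 (n : ℕ) (w c : Fin n → ℝ)
    (hw : ∀ i, 0 ≤ w i) (hc : ∀ i, 0 < c i)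
    (s : Equiv.Perm (Fin n)) :
    (∀ i j : Fin n, (i : ℕ) + 1 = (j : ℕ) →
      dPerm w c s - dPerm w c (s * Equiv.swap i j)
        = c (s i) * c (s j) * (w (s j) / c (s j) - w (s i) / c (s i))) ∧
    ((∀ σ : Equiv.Perm (Fin n), dPerm w c s ≤ dPerm w c σ) ↔
      (∀ i j : Fin n, i ≤ j → w (s j) / c (s j) ≤ w (s i) / c (s i))) :=
  stmt_10_general n w c hc s
end

section
/- Bound on the expected stopping time: if at each round the cost incurred is a random variable in [0,1] with conditional expectation at least c_min > 0 given the past, and τ_B is the first round at which the cumulative cost exceeds budget B, then E[τ_B] ≤ T_B + 1 + (2/c_min²)·exp(−c_min·B), where T_B = ⌈2B/c_min⌉. -/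
/-!
Let `S t = ∑_{u < t} X u` be the cost after `t` rounds. Since `τ > t` forces `S t ≤ B`,
`E[τ] ≤ ∑_t P(S t ≤ B)`. By the conditional Hoeffding lemma,
`E[exp (-2c X t) | ℱ t] ≤ exp (-3c²/2)`, so `E[exp (-2c S t)] ≤ exp (-3c²t/2)` and Chernoff's
bound gives `P(S t ≤ B) ≤ exp (-c²t/2)` as soon as `c t ≥ 2B`, in particular for `t > T_B`.
Bounding the first `T_B + 1` terms by `1` and summing the geometric tail gives the claim.
-/

open MeasureTheory ProbabilityTheory Real
open scoped ENNReal

lemma one_sub_add_mul_exp_le {p : ℝ} (hp0 : 0 ≤ p) (hp1 : p ≤ 1) (l : ℝ) :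
    1 - p + p * exp l ≤ exp (l ^ 2 / 8 + l * p) := by
  -- Hoeffding's lemma for the Bernoulli law `ν = (1 - p) δ₀ + p δ₁`.
  set ν : Measure ℝ :=
    ENNReal.ofReal (1 - p) • Measure.dirac 0 + ENNReal.ofReal p • Measure.dirac 1
  have hp1' : 0 ≤ 1 - p := sub_nonneg.2 hp1
  have : IsProbabilityMeasure ν := ⟨by simp [ν, ← ENNReal.ofReal_add hp1' hp0]⟩
  have hν (f : ℝ → ℝ) : ∫ x, f x ∂ν = (1 - p) * f 0 + p * f 1 := by
    rw [integral_add_measure ((integrable_dirac enorm_lt_top).smul_measure ENNReal.ofReal_ne_top)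
      ((integrable_dirac enorm_lt_top).smul_measure ENNReal.ofReal_ne_top),
      integral_smul_measure, integral_smul_measure, integral_dirac, integral_dirac,
      ENNReal.toReal_ofReal hp1', ENNReal.toReal_ofReal hp0, smul_eq_mul, smul_eq_mul]
  have hIcc : ∀ᵐ x ∂ν, x ∈ Set.Icc (0 : ℝ) 1 :=
    ae_add_measure_iff.2 ⟨Measure.ae_smul_measure ((ae_dirac_iff measurableSet_Icc).2 (by simp)) _,
      Measure.ae_smul_measure ((ae_dirac_iff measurableSet_Icc).2 (by simp)) _⟩
  have h := (hasSubgaussianMGF_of_mem_Icc aemeasurable_id hIcc).mgf_le l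
  simp only [mgf, hν, id] at h
  have hc : (((‖(1 : ℝ) - 0‖₊ / 2) ^ 2 : NNReal) : ℝ) * l ^ 2 / 2 = l ^ 2 / 8 := by
    norm_num; ring
  rw [hc] at h
  simp only [mul_zero, zero_add, mul_one, zero_sub] at h
  have e₀ : exp (l * p) * exp (l * -p) = 1 := by rw [← exp_add]; simp
  have e₁ : exp (l * p) * exp (l * (1 - p)) = exp l := by rw [← exp_add]; ring_nf
  calc 1 - p + p * exp l
      = exp (l * p) * ((1 - p) * exp (l * -p) + p * exp (l * (1 - p))) := by
        linear_combination (1 - p) * e₀.symm + p * e₁.symm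
    _ ≤ exp (l * p) * exp (l ^ 2 / 8) := by gcongr
    _ = exp (l ^ 2 / 8 + l * p) := by rw [← exp_add, add_comm]

lemma exp_mul_le_one_sub_add_mul_exp {x : ℝ} (hx : x ∈ Set.Icc (0 : ℝ) 1) (l : ℝ) :
    exp (l * x) ≤ 1 - x + x * exp l := by
  have h := convexOn_exp.2 (Set.mem_univ 0) (Set.mem_univ l) (sub_nonneg.2 hx.2) hx.1
    (sub_add_cancel 1 x)
  simpa [mul_comm x l] using h

lemma exp_neg_sq_half_pow_succ_div_le {c B : ℝ} (hc : 0 < c) {T : ℕ} (hT : 2 * B ≤ c * T) :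
    exp (-c ^ 2 / 2) ^ (T + 1) / (1 - exp (-c ^ 2 / 2)) ≤ 2 / c ^ 2 * exp (-c * B) := by
  set r := exp (-c ^ 2 / 2)
  have hr1 : r < 1 := exp_lt_one_iff.2 (by nlinarith)
  -- `exp (c²/2) ≥ 1 + c²/2` gives `r ≤ 2 / (2 + c²)`, i.e. `r / (1 - r) ≤ 2 / c²`.
  have hgap : r / (1 - r) ≤ 2 / c ^ 2 := by
    have h := add_one_le_exp (c ^ 2 / 2)
    have hr : exp (c ^ 2 / 2) * r = 1 := by rw [← exp_add]; ring_nf; exact exp_zero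
    rw [div_le_div_iff₀ (by linarith) (by positivity)]
    nlinarith [exp_pos (-c ^ 2 / 2)]
  have hpow : r ^ T ≤ exp (-c * B) := by
    rw [← exp_nat_mul, exp_le_exp]
    nlinarith
  calc r ^ (T + 1) / (1 - r) = r ^ T * (r / (1 - r)) := by rw [pow_succ, mul_div_assoc]
    _ ≤ exp (-c * B) * (2 / c ^ 2) :=
        mul_le_mul hpow hgap (div_nonneg (exp_pos _).le (by linarith)) (exp_pos _).le
    _ = 2 / c ^ 2 * exp (-c * B) := mul_comm _ _

lemma tsum_le_of_le_one_of_le_pow {a : ℕ → ℝ≥0∞} {r : ℝ} (hr0 : 0 ≤ r) (hr1 : r < 1) (N : ℕ)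
    (h1 : ∀ t, a t ≤ 1) (hr : ∀ t, N ≤ t → a t ≤ ENNReal.ofReal (r ^ t)) :
    ∑' t, a t ≤ ENNReal.ofReal (N + r ^ N / (1 - r)) := by
  have hgeom : ∑' i, r ^ (i + N) = r ^ N / (1 - r) := by
    simp_rw [pow_add]
    rw [tsum_mul_right, tsum_geometric_of_lt_one hr0 hr1, inv_mul_eq_div]
  rw [← (ENNReal.summable (f := fun i ↦ a (i + N))).sum_add_tsum_nat_add',
    ENNReal.ofReal_add (Nat.cast_nonneg N) (div_nonneg (pow_nonneg hr0 N) (by linarith)),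
    ENNReal.ofReal_natCast, ← hgeom,
    ENNReal.ofReal_tsum_of_nonneg (fun i ↦ pow_nonneg hr0 _)
      ((summable_geometric_of_lt_one hr0 hr1).comp_injective (add_left_injective N))]
  gcongr with i
  · calc ∑ t ∈ Finset.range N, a t ≤ ∑ t ∈ Finset.range N, 1 := Finset.sum_le_sum fun t _ ↦ h1 t
      _ = N := by simp
  · exact hr _ (Nat.le_add_left N i)

section Probability

variable {Ω : Type*} {m m0 : MeasurableSpace Ω} {μ : Measure Ω}

lemma condExp_exp_mul_le [IsFiniteMeasure μ] (hm : m ≤ m0) {Y : Ω → ℝ} (hY : AEMeasurable Y μ)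
    (hY01 : ∀ᵐ ω ∂μ, Y ω ∈ Set.Icc (0 : ℝ) 1) (l : ℝ) :
    μ[fun ω ↦ exp (l * Y ω) | m] ≤ᵐ[μ] fun ω ↦ exp (l ^ 2 / 8 + l * μ[Y | m] ω) := by
  have hYint : Integrable Y μ := .of_mem_Icc 0 1 hY hY01
  have hlin : μ[(fun _ ↦ 1) + (exp l - 1) • Y | m] =ᵐ[μ]
      fun ω ↦ 1 - μ[Y | m] ω + μ[Y | m] ω * exp l := by
    filter_upwards [condExp_add (integrable_const 1) (hYint.smul (exp l - 1)) m,
      condExp_smul (μ := μ) (exp l - 1) Y m] with ω h₁ h₂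
    rw [h₁, Pi.add_apply, h₂, condExp_const hm, Pi.smul_apply, smul_eq_mul]
    ring
  have hcvx : μ[fun ω ↦ exp (l * Y ω) | m] ≤ᵐ[μ] μ[(fun _ ↦ 1) + (exp l - 1) • Y | m] := by
    refine condExp_mono (integrable_exp_mul_of_mem_Icc hY hY01)
      ((integrable_const 1).add (hYint.smul _)) ?_
    filter_upwards [hY01] with ω hω
    simp only [Pi.add_apply, Pi.smul_apply, smul_eq_mul]
    linarith [exp_mul_le_one_sub_add_mul_exp hω l]
  filter_upwards [hcvx, hlin, condExp_nonneg (m := m) (hY01.mono fun ω h ↦ h.1),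
    condExp_le_nonneg_const (m := m) zero_le_one (hY01.mono fun ω h ↦ h.2)] with ω h₁ h₂ h₃ h₄
  exact h₁.trans (h₂.trans_le (one_sub_add_mul_exp_le h₃ h₄ l))

lemma integral_mul_le_of_condExp_le [IsFiniteMeasure μ] (hm : m ≤ m0) {f g : Ω → ℝ} {C K : ℝ}
    (hf : StronglyMeasurable[m] f) (hf0 : ∀ ω, 0 ≤ f ω) (hfC : ∀ ω, f ω ≤ C)
    (hg : Integrable g μ) (hgK : μ[g | m] ≤ᵐ[μ] fun _ ↦ K) :
    ∫ ω, f ω * g ω ∂μ ≤ K * ∫ ω, f ω ∂μ := by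
  have hf_meas : AEStronglyMeasurable f μ := (hf.mono hm).aestronglyMeasurable
  have hf_bdd : ∀ᵐ ω ∂μ, ‖f ω‖ ≤ C :=
    .of_forall fun ω ↦ by rw [norm_of_nonneg (hf0 ω)]; exact hfC ω
  calc ∫ ω, f ω * g ω ∂μ = ∫ ω, μ[f * g | m] ω ∂μ := (integral_condExp hm).symm
    _ = ∫ ω, f ω * μ[g | m] ω ∂μ :=
      integral_congr_ae (condExp_mul_of_stronglyMeasurable_left hf (hg.bdd_mul hf_meas hf_bdd) hg)
    _ ≤ ∫ ω, f ω * K ∂μ := by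
      refine integral_mono_ae (integrable_condExp.bdd_mul hf_meas hf_bdd)
        ((Integrable.of_mem_Icc 0 C hf_meas.aemeasurable
          (.of_forall fun ω ↦ ⟨hf0 ω, hfC ω⟩)).mul_const K) ?_
      filter_upwards [hgK] with ω hω
      exact mul_le_mul_of_nonneg_left hω (hf0 ω)
    _ = K * ∫ ω, f ω ∂μ := by rw [integral_mul_const, mul_comm]

lemma integral_prod_le_pow_of_condExp_le [IsProbabilityMeasure μ] (ℱ : Filtration ℕ m0)
    {g : ℕ → Ω → ℝ} {K : ℝ} (hK : 0 ≤ K) (hg : ∀ t, StronglyMeasurable[ℱ (t + 1)] (g t))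
    (hg01 : ∀ t ω, g t ω ∈ Set.Icc (0 : ℝ) 1) (hgK : ∀ t, μ[g t | ℱ t] ≤ᵐ[μ] fun _ ↦ K)
    (n : ℕ) :
    ∫ ω, ∏ t ∈ Finset.range n, g t ω ∂μ ≤ K ^ n := by
  induction n with
  | zero => simp
  | succ n ih =>
    have hprod : StronglyMeasurable[ℱ n] fun ω ↦ ∏ t ∈ Finset.range n, g t ω :=
      Finset.stronglyMeasurable_fun_prod _ fun t ht ↦
        (hg t).mono (ℱ.mono (Finset.mem_range.1 ht))
    calc ∫ ω, ∏ t ∈ Finset.range (n + 1), g t ω ∂μ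
        = ∫ ω, (∏ t ∈ Finset.range n, g t ω) * g n ω ∂μ := by
          simp only [Finset.prod_range_succ]
      _ ≤ K * ∫ ω, ∏ t ∈ Finset.range n, g t ω ∂μ :=
          integral_mul_le_of_condExp_le (ℱ.le n) hprod
            (fun ω ↦ Finset.prod_nonneg fun t _ ↦ (hg01 t ω).1)
            (fun ω ↦ Finset.prod_le_one (fun t _ ↦ (hg01 t ω).1) fun t _ ↦ (hg01 t ω).2)
            (.of_mem_Icc 0 1 ((hg n).mono (ℱ.le _)).measurable.aemeasurable
              (.of_forall (hg01 n)))
            (hgK n)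
      _ ≤ K * K ^ n := by gcongr
      _ = K ^ (n + 1) := (pow_succ' K n).symm

lemma measure_sum_range_le_le_exp_pow [IsProbabilityMeasure μ] {ℱ : Filtration ℕ m0} {X : ℕ → Ω → ℝ}
    {c : ℝ} (hX : ∀ t, StronglyMeasurable[ℱ (t + 1)] (X t))
    (hX01 : ∀ t ω, X t ω ∈ Set.Icc (0 : ℝ) 1) (hc : 0 ≤ c)
    (hcond : ∀ t, ∀ᵐ ω ∂μ, c ≤ μ[X t | ℱ t] ω) {B : ℝ} {n : ℕ} (hn : 2 * B ≤ c * n) :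
    μ {ω | ∑ t ∈ Finset.range n, X t ω ≤ B} ≤ ENNReal.ofReal (exp (-c ^ 2 / 2) ^ n) := by
  -- Chernoff's bound at the fixed parameter `-2c`, which is optimal when `c n = 2 B`.
  set S : Ω → ℝ := fun ω ↦ ∑ t ∈ Finset.range n, X t ω
  have hlX : ∀ t ω, -2 * c * X t ω ≤ 0 := fun t ω ↦
    mul_nonpos_of_nonpos_of_nonneg (by linarith) (hX01 t ω).1
  have hstep : ∀ t, μ[fun ω ↦ exp (-2 * c * X t ω) | ℱ t] ≤ᵐ[μ] fun _ ↦ exp (-(3 / 2) * c ^ 2) :=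
    fun t ↦ by
      filter_upwards [condExp_exp_mul_le (ℱ.le t) ((hX t).mono (ℱ.le _)).measurable.aemeasurable
        (.of_forall (hX01 t)) (-2 * c), hcond t] with ω h₁ h₂
      exact h₁.trans (exp_le_exp.2 (by nlinarith))
  have hmgf : mgf S μ (-2 * c) ≤ exp (-(3 / 2) * c ^ 2) ^ n := by
    have := integral_prod_le_pow_of_condExp_le ℱ (exp_pos _).le
      (fun t ↦ continuous_exp.comp_stronglyMeasurable ((hX t).const_mul (-2 * c)))
      (fun t ω ↦ ⟨(exp_pos _).le, exp_le_one_iff.2 (hlX t ω)⟩) hstep n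
    simpa only [mgf, S, Finset.mul_sum, exp_sum] using this
  have hexp_int : Integrable (fun ω ↦ exp (-2 * c * S ω)) μ := by
    refine .of_mem_Icc 0 1 (measurable_exp.comp_aemeasurable (Measurable.aemeasurable ?_))
      (.of_forall fun ω ↦ ⟨(exp_pos _).le, exp_le_one_iff.2 ?_⟩)
    · exact (Finset.measurable_fun_sum _ fun t _ ↦ ((hX t).mono (ℱ.le _)).measurable).const_mul _
    · rw [Finset.mul_sum]
      exact Finset.sum_nonpos fun t _ ↦ hlX t ω
  rw [← ofReal_measureReal]
  refine ENNReal.ofReal_le_ofReal ((measure_le_le_exp_mul_mgf B (by linarith) hexp_int).trans ?_)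
  calc exp (-(-2 * c) * B) * mgf S μ (-2 * c)
      ≤ exp (2 * c * B) * exp (-(3 / 2) * c ^ 2) ^ n := by
        rw [show -(-2 * c) * B = 2 * c * B by ring]; gcongr
    _ ≤ exp (-c ^ 2 / 2) ^ n := by
        rw [← exp_nat_mul, ← exp_nat_mul, ← exp_add, exp_le_exp]
        nlinarith

lemma lintegral_natCast_le_tsum_measure {τ : Ω → ℕ} {A : ℕ → Set Ω} (hA : ∀ t, MeasurableSet (A t))
    (hτA : ∀ ω t, t < τ ω → ω ∈ A t) :
    ∫⁻ ω, (τ ω : ℝ≥0∞) ∂μ ≤ ∑' t, μ (A t) := by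
  have hpt : ∀ ω, (τ ω : ℝ≥0∞) ≤ ∑' t, (A t).indicator 1 ω := fun ω ↦
    calc (τ ω : ℝ≥0∞) = ∑ t ∈ Finset.range (τ ω), (A t).indicator 1 ω := by
          rw [Finset.sum_congr rfl fun t ht ↦
            Set.indicator_of_mem (hτA ω t (Finset.mem_range.1 ht)) _]
          simp
      _ ≤ ∑' t, (A t).indicator 1 ω := ENNReal.sum_le_tsum _
  calc ∫⁻ ω, (τ ω : ℝ≥0∞) ∂μ ≤ ∫⁻ ω, ∑' t, (A t).indicator 1 ω ∂μ := lintegral_mono hpt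
    _ = ∑' t, μ (A t) := by
      rw [lintegral_tsum fun t ↦ (measurable_one.indicator (hA t)).aemeasurable]
      simp_rw [lintegral_indicator_one (hA _)]

end Probability

theorem stmt_12_general {Ω : Type*} [m0 : MeasurableSpace Ω]
    (μ : Measure Ω) [IsProbabilityMeasure μ]
    (ℱ : Filtration ℕ m0) (X : ℕ → Ω → ℝ)
    (hmeas : ∀ t, StronglyMeasurable[ℱ (t + 1)] (X t))
    (hbound : ∀ t ω, X t ω ∈ Set.Icc (0 : ℝ) 1)
    (cmin : ℝ) (hcmin : 0 < cmin)
    (hcond : ∀ t, ∀ᵐ ω ∂μ, cmin ≤ (μ[X t | ℱ t]) ω)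
    (B : ℝ)
    (τ : Ω → ℕ)
    (hτ : ∀ ω, τ ω = sInf {t : ℕ | B < ∑ u ∈ Finset.range t, X u ω}) :
    ∫⁻ ω, (τ ω : ℝ≥0∞) ∂μ
      ≤ ENNReal.ofReal
          ((⌈2 * B / cmin⌉₊ : ℝ) + 1 + 2 / cmin ^ 2 * Real.exp (-cmin * B)) := by
  set T := ⌈2 * B / cmin⌉₊
  have hT : 2 * B ≤ cmin * T := by
    rw [mul_comm cmin, ← div_le_iff₀ hcmin]
    exact Nat.le_ceil _
  have hr1 : exp (-cmin ^ 2 / 2) < 1 := exp_lt_one_iff.2 (by nlinarith)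
  calc ∫⁻ ω, (τ ω : ℝ≥0∞) ∂μ ≤ ∑' t, μ {ω | ∑ u ∈ Finset.range t, X u ω ≤ B} :=
        lintegral_natCast_le_tsum_measure
          (fun t ↦ measurableSet_le (Finset.measurable_fun_sum _ fun u _ ↦
            ((hmeas u).mono (ℱ.le _)).measurable) measurable_const)
          fun ω t ht ↦ show _ ≤ B from not_lt.1 (Nat.notMem_of_lt_sInf (hτ ω ▸ ht))
    _ ≤ ENNReal.ofReal (↑(T + 1) + exp (-cmin ^ 2 / 2) ^ (T + 1) / (1 - exp (-cmin ^ 2 / 2))) :=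
        tsum_le_of_le_one_of_le_pow (exp_pos _).le hr1 (T + 1) (fun _ ↦ prob_le_one)
          fun t ht ↦ measure_sum_range_le_le_exp_pow hmeas hbound hcmin.le hcond
            (hT.trans (by gcongr; exact_mod_cast (T.le_succ.trans ht)))
    _ ≤ _ := ENNReal.ofReal_le_ofReal (by
        push_cast
        linarith [exp_neg_sq_half_pow_succ_div_le hcmin hT])

/-- Bound on the expected stopping time: if at each round the cost is in `[0,1]`
with conditional expectation at least `c_min > 0` given the past, and `τ_B` is
the first round at which the cumulative cost exceeds the budget `B`, then
`E[τ_B] ≤ T_B + 1 + (2/c_min²) exp(−c_min B)` with `T_B = ⌈2B/c_min⌉`. -/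
theorem stmt_12 {Ω : Type*} [m0 : MeasurableSpace Ω]
    (μ : Measure Ω) [IsProbabilityMeasure μ]
    (ℱ : Filtration ℕ m0) (X : ℕ → Ω → ℝ)
    (hmeas : ∀ t, StronglyMeasurable[ℱ (t + 1)] (X t))
    (hbound : ∀ t ω, X t ω ∈ Set.Icc (0 : ℝ) 1)
    (cmin : ℝ) (hcmin : 0 < cmin) (hcmin1 : cmin ≤ 1)
    (hcond : ∀ t, ∀ᵐ ω ∂μ, cmin ≤ (μ[X t | ℱ t]) ω)
    (B : ℝ) (hB : 0 < B)
    (τ : Ω → ℕ)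
    (hτ : ∀ ω, τ ω = sInf {t : ℕ | B < ∑ u ∈ Finset.range t, X u ω}) :
    ∫⁻ ω, (τ ω : ℝ≥0∞) ∂μ
      ≤ ENNReal.ofReal
          ((⌈2 * B / cmin⌉₊ : ℝ) + 1 + 2 / cmin ^ 2 * Real.exp (-cmin * B)) :=
  stmt_12_general (m0 := m0) μ ℱ X hmeas hbound cmin hcmin hcond B τ hτ
end

section
/- High-probability Pinsker inequality: for probability measures P and Q on the same measurable space and any event A, P(A) + Q(Aᶜ) ≥ (1/2)·exp(−KL(P‖Q)). -/
open MeasureTheory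
open scoped ENNReal Classical

/-- The Kullback–Leibler divergence `KL(P‖Q)`, as an extended real number:
the integral of the log-likelihood ratio when `P ≪ Q` (and it is integrable),
and `+∞` otherwise. -/
noncomputable def klDiv {Ω : Type*} [MeasurableSpace Ω] (P Q : Measure Ω) : EReal :=
  if P ≪ Q ∧ Integrable (llr P Q) P then ((∫ ω, llr P Q ω ∂P : ℝ) : EReal) else ⊤

/-!
Write `p = dP/dQ`. Bounding the integrand by `p` on `A` and by `1` on `Aᶜ` gives
`P(A) + Q(Aᶜ) ≥ ∫ min(p, 1) dQ`. Since `√p = √(min(p, 1) · max(p, 1))` and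
`∫ max(p, 1) dQ ≤ ∫ (p + 1) dQ = 2`, Cauchy–Schwarz yields `(∫ √p dQ)² ≤ 2 ∫ min(p, 1) dQ`.
Finally `∫ √p dQ = ∫ exp(-llr/2) dP ≥ exp(-KL(P‖Q)/2)` by Jensen's inequality.
-/

open Real Filter

section CauchySchwarz

variable {α : Type*} [MeasurableSpace α] {μ : Measure α} {f g : α → ℝ}

lemma memLp_two_sqrt (hf : 0 ≤ᵐ[μ] f) (hfi : Integrable f μ) :
    MemLp (fun x ↦ √(f x)) 2 μ := by
  refine (memLp_two_iff_integrable_sq hfi.aemeasurable.sqrt.aestronglyMeasurable).2 ?_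
  refine hfi.congr ?_
  filter_upwards [hf] with x hx
  exact (sq_sqrt hx).symm

lemma integral_sqrt_mul_le (hf : 0 ≤ᵐ[μ] f) (hg : 0 ≤ᵐ[μ] g) (hfi : Integrable f μ)
    (hgi : Integrable g μ) :
    ∫ x, √(f x * g x) ∂μ ≤ √(∫ x, f x ∂μ) * √(∫ x, g x ∂μ) := by
  have hcs := integral_mul_le_Lp_mul_Lq_of_nonneg HolderConjugate.two_two
    (ae_of_all _ fun x ↦ sqrt_nonneg (f x)) (ae_of_all _ fun x ↦ sqrt_nonneg (g x))
    (by simpa using memLp_two_sqrt hf hfi) (by simpa using memLp_two_sqrt hg hgi)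
  have hsq : ∀ {h : α → ℝ}, 0 ≤ᵐ[μ] h → ∫ x, √(h x) ^ (2 : ℝ) ∂μ = ∫ x, h x ∂μ := fun hh ↦
    integral_congr_ae <| by filter_upwards [hh] with x hx using by rw [rpow_two, sq_sqrt hx]
  rw [hsq hf, hsq hg, ← sqrt_eq_rpow, ← sqrt_eq_rpow] at hcs
  refine le_of_eq_of_le (integral_congr_ae ?_) hcs
  filter_upwards [hf] with x hx using sqrt_mul hx _

lemma sq_integral_sqrt_mul_le_integral_min_mul (hf : 0 ≤ᵐ[μ] f) (hg : 0 ≤ᵐ[μ] g)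
    (hfi : Integrable f μ) (hgi : Integrable g μ) :
    (∫ x, √(f x * g x) ∂μ) ^ 2 ≤
      (∫ x, min (f x) (g x) ∂μ) * ((∫ x, f x ∂μ) + ∫ x, g x ∂μ) := by
  have hmin : 0 ≤ᵐ[μ] fun x ↦ min (f x) (g x) := by
    filter_upwards [hf, hg] with x hfx hgx using le_min hfx hgx
  have hmax : 0 ≤ᵐ[μ] fun x ↦ max (f x) (g x) := by
    filter_upwards [hf] with x hfx using le_max_of_le_left hfx
  have hmax_le : ∫ x, max (f x) (g x) ∂μ ≤ (∫ x, f x ∂μ) + ∫ x, g x ∂μ := by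
    rw [← integral_add hfi hgi]
    refine integral_mono_ae (hfi.sup hgi) (hfi.add hgi) ?_
    filter_upwards [hf, hg] with x hfx hgx
    exact max_le (le_add_of_nonneg_right hgx) (le_add_of_nonneg_left hfx)
  calc (∫ x, √(f x * g x) ∂μ) ^ 2
      = (∫ x, √(min (f x) (g x) * max (f x) (g x)) ∂μ) ^ 2 := by simp_rw [min_mul_max]
    _ ≤ (√(∫ x, min (f x) (g x) ∂μ) * √(∫ x, max (f x) (g x) ∂μ)) ^ 2 :=
      pow_le_pow_left₀ (integral_nonneg fun x ↦ sqrt_nonneg _)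
        (integral_sqrt_mul_le hmin hmax (hfi.inf hgi) (hfi.sup hgi)) 2
    _ = (∫ x, min (f x) (g x) ∂μ) * ∫ x, max (f x) (g x) ∂μ := by
      rw [mul_pow, sq_sqrt (integral_nonneg_of_ae hmin), sq_sqrt (integral_nonneg_of_ae hmax)]
    _ ≤ (∫ x, min (f x) (g x) ∂μ) * ((∫ x, f x ∂μ) + ∫ x, g x ∂μ) := by
      gcongr
      exact integral_nonneg_of_ae hmin

end CauchySchwarz

lemma mul_exp_neg_log_div_two {p : ℝ} (hp : 0 ≤ p) : p * exp (-log p / 2) = √p := by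
  rcases hp.eq_or_lt with rfl | hp
  · simp
  · rw [neg_div, exp_neg, exp_half, exp_log hp, ← div_eq_mul_inv, div_sqrt]

section RnDeriv

variable {Ω : Type*} [MeasurableSpace Ω] {P Q : Measure Ω}

lemma integral_min_toReal_rnDeriv_one_le [IsFiniteMeasure P] [IsFiniteMeasure Q] {A : Set Ω}
    (hA : MeasurableSet A) :
    ∫ x, min (P.rnDeriv Q x).toReal 1 ∂Q ≤ P.real A + Q.real Aᶜ := by
  have hint : Integrable (fun x ↦ min (P.rnDeriv Q x).toReal 1) Q :=
    Measure.integrable_toReal_rnDeriv.inf (integrable_const 1)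
  rw [← integral_add_compl hA hint]
  gcongr
  · calc ∫ x in A, min (P.rnDeriv Q x).toReal 1 ∂Q
        ≤ ∫ x in A, (P.rnDeriv Q x).toReal ∂Q :=
          integral_mono hint.integrableOn Measure.integrable_toReal_rnDeriv.integrableOn
            fun x ↦ min_le_left _ _
      _ ≤ P.real A := Measure.setIntegral_toReal_rnDeriv_le (measure_ne_top P A)
  · calc ∫ x in Aᶜ, min (P.rnDeriv Q x).toReal 1 ∂Q
        ≤ ∫ x in Aᶜ, 1 ∂Q :=
          integral_mono hint.integrableOn (integrable_const 1) fun x ↦ min_le_right _ _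
      _ = Q.real Aᶜ := by simp

lemma exp_neg_half_integral_llr_le_integral_sqrt_rnDeriv [IsProbabilityMeasure P]
    [IsFiniteMeasure Q] (hPQ : P ≪ Q) (hllr : Integrable (llr P Q) P) :
    exp (-(∫ x, llr P Q x ∂P) / 2) ≤ ∫ x, √(P.rnDeriv Q x).toReal ∂Q := by
  have hsqrt (x : Ω) :
      (P.rnDeriv Q x).toReal * exp (-llr P Q x / 2) = √(P.rnDeriv Q x).toReal :=
    mul_exp_neg_log_div_two ENNReal.toReal_nonneg
  have hint : Integrable (fun x ↦ exp (-llr P Q x / 2)) P := by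
    rw [← integrable_toReal_rnDeriv_mul_iff hPQ]
    simp_rw [hsqrt]
    exact (memLp_two_sqrt (ae_of_all _ fun _ ↦ ENNReal.toReal_nonneg)
      Measure.integrable_toReal_rnDeriv).integrable one_le_two
  calc exp (-(∫ x, llr P Q x ∂P) / 2) = exp (∫ x, -llr P Q x / 2 ∂P) := by
        rw [integral_div, integral_neg]
    _ ≤ ∫ x, exp (-llr P Q x / 2) ∂P :=
      convexOn_exp.map_integral_le continuous_exp.continuousOn isClosed_univ
        (ae_of_all _ fun _ ↦ Set.mem_univ _) (hllr.neg.div_const 2) hint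
    _ = ∫ x, √(P.rnDeriv Q x).toReal ∂Q := by
      rw [← integral_toReal_rnDeriv_mul hPQ]
      simp_rw [hsqrt]

lemma two_inv_mul_exp_neg_integral_llr_le [IsProbabilityMeasure P] [IsProbabilityMeasure Q]
    (hPQ : P ≪ Q) (hllr : Integrable (llr P Q) P) {A : Set Ω} (hA : MeasurableSet A) :
    2⁻¹ * exp (-∫ x, llr P Q x ∂P) ≤ P.real A + Q.real Aᶜ := by
  have hbc : (∫ x, √(P.rnDeriv Q x).toReal ∂Q) ^ 2 ≤
      2 * ∫ x, min (P.rnDeriv Q x).toReal 1 ∂Q := by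
    have := sq_integral_sqrt_mul_le_integral_min_mul (g := fun _ ↦ (1 : ℝ))
      (ae_of_all Q fun x ↦ ENNReal.toReal_nonneg) (ae_of_all _ fun _ ↦ zero_le_one)
      (Measure.integrable_toReal_rnDeriv (μ := P)) (integrable_const 1)
    simp only [mul_one, Measure.integral_toReal_rnDeriv hPQ, integral_const, probReal_univ,
      smul_eq_mul] at this
    linarith
  calc 2⁻¹ * exp (-∫ x, llr P Q x ∂P)
      = 2⁻¹ * exp (-(∫ x, llr P Q x ∂P) / 2) ^ 2 := by rw [← exp_nat_mul]; ring_nf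
    _ ≤ 2⁻¹ * (∫ x, √(P.rnDeriv Q x).toReal ∂Q) ^ 2 := by
      gcongr
      exact exp_neg_half_integral_llr_le_integral_sqrt_rnDeriv hPQ hllr
    _ ≤ ∫ x, min (P.rnDeriv Q x).toReal 1 ∂Q := by linarith
    _ ≤ P.real A + Q.real Aᶜ := integral_min_toReal_rnDeriv_one_le hA

end RnDeriv

/-- High-probability Pinsker inequality: for probability measures `P, Q` and any
event `A`, `P(A) + Q(Aᶜ) ≥ (1/2)·exp(−KL(P‖Q))`. -/
theorem stmt_16 {Ω : Type*} [MeasurableSpace Ω] (P Q : Measure Ω)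
    [IsProbabilityMeasure P] [IsProbabilityMeasure Q]
    (A : Set Ω) (hA : MeasurableSet A) :
    2⁻¹ * EReal.exp (-(klDiv P Q)) ≤ P A + Q Aᶜ := by
  unfold klDiv
  split_ifs with h
  · rw [← EReal.coe_neg, EReal.exp_coe, ← ENNReal.toReal_le_toReal
      (ENNReal.mul_ne_top (by simp) ENNReal.ofReal_ne_top) (by simp),
      ENNReal.toReal_mul, ENNReal.toReal_add (measure_ne_top _ _) (measure_ne_top _ _),
      ENNReal.toReal_ofReal (exp_nonneg _), ENNReal.toReal_inv, ENNReal.toReal_ofNat]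
    exact two_inv_mul_exp_neg_integral_llr_le h.1 h.2 hA
  · simp
end
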